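/- Let δ > 0 and let a : B′_δ(0) ⊂ ℝ^{N−1} → ℝ be a C¹ function with a(0) = 0 and ∇a(0) = 0 which is not identically zero on B′_δ(0). Let (p_n) be a sequence in ℝ^N such that for some constant C, |p_n · (x′, a(x′))| ≤ C for all n and all x′ ∈ B′_δ(0). Then the sequence (p_n) is bounded. -/

import Mathlib

open scoped RealInnerProductSpace
open Metric

noncomputable section

/-- `ℝ^N` as a Euclidean space. -/
abbrev Euc (N : ℕ) := EuclideanSpace ℝ (Fin N)

/-- real `N × N` matrices. -/
abbrev MatN (N : ℕ) := Matrix (Fin N) (Fin N) ℝ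

variable {N : ℕ}

/-- Pucci maximal operator `M⁺(M) = λ tr(M⁻) + Λ tr(M⁺)`, written in terms of the
eigenvalues of the symmetric matrix `M`. -/
noncomputable def pucciSup (lam Lam : ℝ) (M : MatN N) : ℝ :=
  if h : M.IsHermitian then
    ∑ i, (lam * min (h.eigenvalues i) 0 + Lam * max (h.eigenvalues i) 0)
  else 0

/-- Pucci minimal operator `M⁻(M) = λ tr(M⁺) + Λ tr(M⁻)`. -/
noncomputable def pucciInf (lam Lam : ℝ) (M : MatN N) : ℝ :=
  if h : M.IsHermitian then
    ∑ i, (lam * max (h.eigenvalues i) 0 + Lam * min (h.eigenvalues i) 0)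
  else 0

/-- `F` is uniformly elliptic with ellipticity constants `lam ≤ Lam`:
`M⁻(M) ≤ F(M) ≤ M⁺(M)` for every symmetric `M`. -/
def UniformlyElliptic (lam Lam : ℝ) (F : MatN N → ℝ) : Prop :=
  Continuous F ∧ ∀ M : MatN N, M.IsHermitian →
    pucciInf lam Lam M ≤ F M ∧ F M ≤ pucciSup lam Lam M

/-- Hessian matrix of a real function at a point. -/
noncomputable def hessian (φ : Euc N → ℝ) (x : Euc N) : MatN N :=
  Matrix.of fun i j =>
    iteratedFDeriv ℝ 2 φ x ![EuclideanSpace.single i 1, EuclideanSpace.single j 1]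

/-- Viscosity subsolution of `G(x, ∇u, D²u) = f` on `D`: whenever a `C²` test function
`φ` touches `u` from above (`u - φ` has a local max) at `x₀ ∈ D`, then
`G(x₀, ∇φ(x₀), D²φ(x₀)) ≥ f x₀`. -/
def ViscositySubsolution (D : Set (Euc N)) (G : Euc N → Euc N → MatN N → ℝ)
    (f : Euc N → ℝ) (u : Euc N → ℝ) : Prop :=
  ∀ x₀ ∈ D, ∀ φ : Euc N → ℝ, ContDiffAt ℝ 2 φ x₀ →
    IsLocalMax (fun x => u x - φ x) x₀ → f x₀ ≤ G x₀ (gradient φ x₀) (hessian φ x₀)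

/-- Viscosity supersolution of `G(x, ∇u, D²u) = f` on `D`. -/
def ViscositySupersolution (D : Set (Euc N)) (G : Euc N → Euc N → MatN N → ℝ)
    (f : Euc N → ℝ) (u : Euc N → ℝ) : Prop :=
  ∀ x₀ ∈ D, ∀ φ : Euc N → ℝ, ContDiffAt ℝ 2 φ x₀ →
    IsLocalMin (fun x => u x - φ x) x₀ → G x₀ (gradient φ x₀) (hessian φ x₀) ≤ f x₀

/-- Viscosity solution: both a sub- and a supersolution. -/
def ViscositySolution (D : Set (Euc N)) (G : Euc N → Euc N → MatN N → ℝ)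
    (f : Euc N → ℝ) (u : Euc N → ℝ) : Prop :=
  ViscositySubsolution D G f u ∧ ViscositySupersolution D G f u

/-- The degenerate elliptic operator `(x, p, M) ↦ |p|^α (F(M) + h(x)·p)`. -/
noncomputable def degenOp (α : ℝ) (F : MatN N → ℝ) (h : Euc N → Euc N) :
    Euc N → Euc N → MatN N → ℝ :=
  fun x p M => ‖p‖ ^ α * (F M + ⟪h x, p⟫)

/-- the first `N` coordinates `y'` of a point `y = (y', y_N)` of `ℝ^{N+1}`. -/
noncomputable def projHyp (y : Euc (N + 1)) : Euc N := WithLp.toLp 2 (fun i => y i.castSucc)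

/-- the last coordinate `y_N` of a point `y = (y', y_N)` of `ℝ^{N+1}`. -/
noncomputable def lastCoord (y : Euc (N + 1)) : ℝ := y (Fin.last N)

/-- the point `(x', s) ∈ ℝ^{N+1}`. -/
noncomputable def withLast (x' : Euc N) (s : ℝ) : Euc (N + 1) :=
  WithLp.toLp 2 (Fin.snoc (α := fun _ => ℝ) (WithLp.ofLp x') s)

/-- the last basis vector `e_N` of `ℝ^{N+1}`. -/
noncomputable def eLast (N : ℕ) : Euc (N + 1) := EuclideanSpace.single (Fin.last N) 1

end

/-!
A vector `(v, c)` orthogonal to every graph point `(x', a x')`, `x'` near `0`, gives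
`c • a = -⟪v, ·⟫` near `0`; comparing derivatives at `0` forces `v = 0`, and then `c = 0` because
`a` does not vanish identically. Hence the graph points span `ℝ^{N+1}`, the functionals `⟪p n, ·⟫`
are pointwise bounded on a spanning set and so everywhere, and Banach–Steinhaus bounds their norms
`‖p n‖`.
-/

open Filter Topology

theorem eq_zero_of_inner_add_mul_eq_zero {E : Type*} [NormedAddCommGroup E]
    [InnerProductSpace ℝ E] {U : Set E} (hU : U ∈ 𝓝 0) {a : E → ℝ} (ha0' : fderiv ℝ a 0 = 0)
    (hane : ∃ x ∈ U, a x ≠ 0) {v : E} {c : ℝ} (h : ∀ x ∈ U, ⟪v, x⟫ + c * a x = 0) :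
    v = 0 ∧ c = 0 := by
  have hlin : c • a =ᶠ[𝓝 0] innerSL ℝ (-v) := eventually_of_mem hU fun x hx => by
    simp only [Pi.smul_apply, smul_eq_mul, innerSL_apply_apply, inner_neg_left]
    linarith [h x hx]
  have hv : innerSL ℝ (-v) = 0 := by
    rw [← (innerSL ℝ (-v)).fderiv (x := 0), ← hlin.fderiv_eq, fderiv_const_smul_field,
      Pi.smul_apply, ha0', smul_zero]
  have hv0 : v = 0 := by simpa using congrArg norm hv
  obtain ⟨x, hx, hax⟩ := hane
  exact ⟨hv0, by simpa [hv0, hax] using h x hx⟩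

theorem exists_norm_le_of_span_eq_top {E ι : Type*} [NormedAddCommGroup E]
    [InnerProductSpace ℝ E] [CompleteSpace E] {S : Set E} (hS : Submodule.span ℝ S = ⊤)
    {p : ι → E} (hp : ∀ s ∈ S, ∃ C, ∀ i, |⟪p i, s⟫| ≤ C) : ∃ R, ∀ i, ‖p i‖ ≤ R := by
  have hbdd : ∀ x, ∃ C, ∀ i, |⟪p i, x⟫| ≤ C := fun x => by
    refine Submodule.span_induction hp ⟨0, by simp⟩ ?_ ?_ (hS ▸ Submodule.mem_top : x ∈ _)
    · rintro x y - - ⟨C, hC⟩ ⟨D, hD⟩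
      refine ⟨C + D, fun i => ?_⟩
      rw [inner_add_right]
      exact (abs_add_le _ _).trans (add_le_add (hC i) (hD i))
    · rintro c x - ⟨C, hC⟩
      refine ⟨|c| * C, fun i => ?_⟩
      rw [real_inner_smul_right, abs_mul]
      exact mul_le_mul_of_nonneg_left (hC i) (abs_nonneg c)
  simpa only [innerSL_apply_norm] using banach_steinhaus (g := fun i => innerSL ℝ (p i)) hbdd

theorem inner_withLast {N : ℕ} (q : Euc (N + 1)) (x' : Euc N) (s : ℝ) :
    ⟪q, withLast x' s⟫ = ⟪projHyp q, x'⟫ + lastCoord q * s := by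
  simp [withLast, projHyp, lastCoord, PiLp.inner_apply, Fin.sum_univ_castSucc, mul_comm]

theorem eq_zero_of_projHyp_eq_zero_of_lastCoord_eq_zero {N : ℕ} {q : Euc (N + 1)}
    (hq' : projHyp q = 0) (hqN : lastCoord q = 0) : q = 0 := by
  ext i
  induction i using Fin.lastCases with
  | last => exact hqN
  | cast j => simpa [projHyp] using congrArg (fun v : Euc N => v j) hq'

theorem span_graph_eq_top {N : ℕ} {U : Set (Euc N)} (hU : U ∈ 𝓝 0) {a : Euc N → ℝ}
    (ha0' : fderiv ℝ a 0 = 0) (hane : ∃ x' ∈ U, a x' ≠ 0) :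
    Submodule.span ℝ ((fun x' => withLast x' (a x')) '' U) = ⊤ := by
  rw [← Submodule.orthogonal_eq_bot_iff, Submodule.eq_bot_iff]
  intro q hq
  have hperp : ∀ x' ∈ U, ⟪projHyp q, x'⟫ + lastCoord q * a x' = 0 := fun x' hx' => by
    rw [← inner_withLast, real_inner_comm]
    exact (Submodule.mem_orthogonal _ q).1 hq _ (Submodule.subset_span ⟨x', hx', rfl⟩)
  obtain ⟨hq', hqN⟩ := eq_zero_of_inner_add_mul_eq_zero hU ha0' hane hperp
  exact eq_zero_of_projHyp_eq_zero_of_lastCoord_eq_zero hq' hqN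

theorem bounded_of_pairing_with_graph_general
    {N : ℕ} (δ : ℝ) (hδ : 0 < δ)
    (a : Euc N → ℝ)
    (ha0' : fderiv ℝ a 0 = 0)
    (hane : ∃ x' ∈ ball (0 : Euc N) δ, a x' ≠ 0)
    (p : ℕ → Euc (N + 1)) (C : ℝ)
    (hp : ∀ n, ∀ x' ∈ ball (0 : Euc N) δ, |⟪p n, withLast x' (a x')⟫| ≤ C) :
    ∃ R : ℝ, ∀ n, ‖p n‖ ≤ R :=
  exists_norm_le_of_span_eq_top (span_graph_eq_top (ball_mem_nhds 0 hδ) ha0' hane) <| by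
    rintro _ ⟨x', hx', rfl⟩
    exact ⟨C, fun n => hp n x' hx'⟩

/-- Proposition 3.7: if `a` is `C¹` on `B'_δ(0)` with `a(0) = 0`, `∇a(0) = 0`, not
identically zero, and `(p_n)` is a sequence of vectors with
`|p_n · (x', a(x'))| ≤ C` for all `x' ∈ B'_δ(0)`, then `(p_n)` is bounded. -/
theorem bounded_of_pairing_with_graph
    {N : ℕ} (δ : ℝ) (hδ : 0 < δ)
    (a : Euc N → ℝ) (ha : ContDiffOn ℝ 1 a (ball (0 : Euc N) δ))
    (ha0 : a 0 = 0) (ha0' : fderiv ℝ a 0 = 0)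
    (hane : ∃ x' ∈ ball (0 : Euc N) δ, a x' ≠ 0)
    (p : ℕ → Euc (N + 1)) (C : ℝ)
    (hp : ∀ n, ∀ x' ∈ ball (0 : Euc N) δ, |⟪p n, withLast x' (a x')⟫| ≤ C) :
    ∃ R : ℝ, ∀ n, ‖p n‖ ≤ R :=
  bounded_of_pairing_with_graph_general δ hδ a ha0' hane p C hp
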